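/- Let ε be the sl3 quadrilateral exchange matrix and let σ be the permutation (1 3)(5 6)(7 8)(9 10)(11 12) of {1,…,12} fixing 2 and 4. Then: (a) relabelling the rows and columns of μ₄(μ₂(ε)) by σ recovers ε, i.e. (μ₄(μ₂(ε)))_{σ(i),σ(j)} = ε_{ij} for all i,j; (b) the map D : ℚ¹² → ℚ¹² defined by D(x)_i := ((μ^T_{4,μ₂(ε)} ∘ μ^T_{2,ε})(x))_{σ(i)} is given explicitly by D(x)_1 = x_3 + [x_4]_+ − [−x_2]_+, D(x)_2 = −x_2, D(x)_3 = x_1 + [x_2]_+ − [−x_4]_+, D(x)_4 = −x_4, D(x)_5 = x_6 + [x_2]_+, D(x)_6 = x_5 − [−x_2]_+, D(x)_7 = x_8 + [x_2]_+, D(x)_8 = x_7 − [−x_2]_+, D(x)_9 = x_10 + [x_4]_+, D(x)_10 = x_9 − [−x_4]_+, D(x)_11 = x_12 + [x_4]_+, D(x)_12 = x_11 − [−x_4]_+; and (c) D ∘ D = id. -/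
import Mathlib


namespace SL3

/-- `[x]_+ := max(0,x)` for rationals. -/
def pos (x : ℚ) : ℚ := max 0 x

/-- `[x,y,z]_+ := max(0, x, x+y, x+y+z)` for rationals. -/
def pos3 (x y z : ℚ) : ℚ := max (max 0 x) (max (x + y) (x + y + z))

/-- Matrix mutation in direction `k`. -/
def mutate {I : Type*} [DecidableEq I] (ε : Matrix I I ℚ) (k : I) : Matrix I I ℚ :=
  Matrix.of fun i j =>
    if i = k ∨ j = k then -ε i j
    else ε i j + (1 / 2) * (ε i k * |ε k j| + |ε i k| * ε k j)

/-- The tropical cluster X-mutation `μ^T_{k,ε}`. -/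
def xMut {I : Type*} [DecidableEq I] (ε : Matrix I I ℚ) (k : I) (x : I → ℚ) : I → ℚ :=
  fun i => if i = k then -x k
    else x i + pos (-(ε i k)) * pos (x k) - pos (ε i k) * pos (-(x k))

/-- The tropical cluster A-mutation `μ^{aT}_{k,ε}`. -/
def aMut {I : Type*} [Fintype I] [DecidableEq I] (ε : Matrix I I ℚ) (k : I) (a : I → ℚ) :
    I → ℚ :=
  fun i => if i = k then
      -a k + max (∑ j, pos (ε k j) * a j) (∑ j, pos (-(ε k j)) * a j)
    else a i

/-- Pairs `(a,b)` (0-indexed) with entry `1` in the sl3 quadrilateral exchange matrix. -/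
def quadOnes : List (Fin 12 × Fin 12) :=
  [(0,3),(0,4),(1,0),(1,5),(1,7),(2,1),(2,8),(3,2),(3,9),(3,11),(4,1),(5,6),(6,1),(7,2),
   (8,3),(9,10),(10,3),(11,0)]

/-- Pairs `(a,b)` (0-indexed) with entry `1/2` in the sl3 quadrilateral exchange matrix. -/
def quadHalves : List (Fin 12 × Fin 12) := [(5,4),(7,6),(9,8),(11,10)]

/-- The sl3 quadrilateral exchange matrix (0-indexed: paper's vertex `i` is index `i-1`). -/
def epsQuad : Matrix (Fin 12) (Fin 12) ℚ :=
  Matrix.of fun i j =>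
    if (i, j) ∈ quadOnes then 1
    else if (j, i) ∈ quadOnes then -1
    else if (i, j) ∈ quadHalves then 1 / 2
    else if (j, i) ∈ quadHalves then -(1 / 2)
    else 0

/-- The permutation `(1 3)(5 6)(7 8)(9 10)(11 12)` of `{1,…,12}` fixing `2` and `4`
(0-indexed). -/
def sigmaQuad : Fin 12 → Fin 12 := ![2, 1, 0, 3, 5, 4, 7, 6, 9, 8, 11, 10]

/-- `D` is the action on tropical shear coordinates of the cluster realization of the Dynkin
involution on the quadrilateral: the mutations at the two face vertices followed by the
permutation swapping the two vertices on each edge. -/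
def DQuad (x : Fin 12 → ℚ) : Fin 12 → ℚ :=
  fun i => xMut (mutate epsQuad 1) 3 (xMut epsQuad 1 x) (sigmaQuad i)

/-- `μ₂(ε)` for the sl3 quadrilateral, as an explicit if-list matrix. -/
def m1Ones : List (Fin 12 × Fin 12) :=
  [(0, 1), (0, 3), (1, 2), (1, 4), (1, 6), (2, 0), (2, 5), (2, 8), (3, 2), (3, 9), (3, 11),
   (4, 7), (5, 1), (6, 0), (7, 1), (8, 3), (9, 10), (10, 3), (11, 0)]

def m1Halves : List (Fin 12 × Fin 12) := [(4, 5), (6, 7), (9, 8), (11, 10)]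

def M1 : Matrix (Fin 12) (Fin 12) ℚ :=
  Matrix.of fun i j =>
    if (i, j) ∈ m1Ones then 1
    else if (j, i) ∈ m1Ones then -1
    else if (i, j) ∈ m1Halves then 1 / 2
    else if (j, i) ∈ m1Halves then -(1 / 2)
    else 0

def m2Ones : List (Fin 12 × Fin 12) :=
  [(0, 1), (0, 9), (1, 2), (1, 4), (1, 6), (2, 3), (2, 5), (3, 0), (3, 8), (3, 10), (4, 7),
   (5, 1), (6, 0), (7, 1), (8, 11), (9, 3), (10, 2), (11, 3)]

def m2Halves : List (Fin 12 × Fin 12) := [(4, 5), (6, 7), (8, 9), (10, 11)]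

def M2 : Matrix (Fin 12) (Fin 12) ℚ :=
  Matrix.of fun i j =>
    if (i, j) ∈ m2Ones then 1
    else if (j, i) ∈ m2Ones then -1
    else if (i, j) ∈ m2Halves then 1 / 2
    else if (j, i) ∈ m2Halves then -(1 / 2)
    else 0

set_option maxHeartbeats 1000000 in
lemma hm1 : mutate epsQuad 1 = M1 := by
  ext i j
  fin_cases i <;> fin_cases j <;>
    · simp (config := { decide := true }) only [mutate, epsQuad, quadOnes, quadHalves,
        M1, m1Ones, m1Halves, Matrix.of_apply]
      try norm_num

set_option maxHeartbeats 1000000 in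
lemma hm2 : mutate M1 3 = M2 := by
  ext i j
  fin_cases i <;> fin_cases j <;>
    · simp (config := { decide := true }) only [mutate, M1, m1Ones, m1Halves,
        M2, m2Ones, m2Halves, Matrix.of_apply]
      try norm_num

lemma v0 {α : Type*} (a0 a1 a2 a3 a4 a5 a6 a7 a8 a9 a10 a11 : α) :
    ![a0,a1,a2,a3,a4,a5,a6,a7,a8,a9,a10,a11] (0:Fin 12) = a0 := rfl
lemma v1 {α : Type*} (a0 a1 a2 a3 a4 a5 a6 a7 a8 a9 a10 a11 : α) :
    ![a0,a1,a2,a3,a4,a5,a6,a7,a8,a9,a10,a11] (1:Fin 12) = a1 := rfl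
lemma v2 {α : Type*} (a0 a1 a2 a3 a4 a5 a6 a7 a8 a9 a10 a11 : α) :
    ![a0,a1,a2,a3,a4,a5,a6,a7,a8,a9,a10,a11] (2:Fin 12) = a2 := rfl
lemma v3 {α : Type*} (a0 a1 a2 a3 a4 a5 a6 a7 a8 a9 a10 a11 : α) :
    ![a0,a1,a2,a3,a4,a5,a6,a7,a8,a9,a10,a11] (3:Fin 12) = a3 := rfl
lemma v4 {α : Type*} (a0 a1 a2 a3 a4 a5 a6 a7 a8 a9 a10 a11 : α) :
    ![a0,a1,a2,a3,a4,a5,a6,a7,a8,a9,a10,a11] (4:Fin 12) = a4 := rfl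
lemma v5 {α : Type*} (a0 a1 a2 a3 a4 a5 a6 a7 a8 a9 a10 a11 : α) :
    ![a0,a1,a2,a3,a4,a5,a6,a7,a8,a9,a10,a11] (5:Fin 12) = a5 := rfl
lemma v6 {α : Type*} (a0 a1 a2 a3 a4 a5 a6 a7 a8 a9 a10 a11 : α) :
    ![a0,a1,a2,a3,a4,a5,a6,a7,a8,a9,a10,a11] (6:Fin 12) = a6 := rfl
lemma v7 {α : Type*} (a0 a1 a2 a3 a4 a5 a6 a7 a8 a9 a10 a11 : α) :
    ![a0,a1,a2,a3,a4,a5,a6,a7,a8,a9,a10,a11] (7:Fin 12) = a7 := rfl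
lemma v8 {α : Type*} (a0 a1 a2 a3 a4 a5 a6 a7 a8 a9 a10 a11 : α) :
    ![a0,a1,a2,a3,a4,a5,a6,a7,a8,a9,a10,a11] (8:Fin 12) = a8 := rfl
lemma v9 {α : Type*} (a0 a1 a2 a3 a4 a5 a6 a7 a8 a9 a10 a11 : α) :
    ![a0,a1,a2,a3,a4,a5,a6,a7,a8,a9,a10,a11] (9:Fin 12) = a9 := rfl
lemma v10 {α : Type*} (a0 a1 a2 a3 a4 a5 a6 a7 a8 a9 a10 a11 : α) :
    ![a0,a1,a2,a3,a4,a5,a6,a7,a8,a9,a10,a11] (10:Fin 12) = a10 := rfl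
lemma v11 {α : Type*} (a0 a1 a2 a3 a4 a5 a6 a7 a8 a9 a10 a11 : α) :
    ![a0,a1,a2,a3,a4,a5,a6,a7,a8,a9,a10,a11] (11:Fin 12) = a11 := rfl

lemma pos_zero : pos 0 = 0 := by norm_num [pos]
lemma pos_one : pos 1 = 1 := by norm_num [pos]
lemma pos_neg_one : pos (-1) = 0 := by norm_num [pos]

set_option maxHeartbeats 1000000 in
lemma partB : ∀ x : Fin 12 → ℚ, DQuad x =
      ![x 2 + pos (x 3) - pos (-(x 1)),
        -x 1,
        x 0 + pos (x 1) - pos (-(x 3)),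
        -x 3,
        x 5 + pos (x 1),
        x 4 - pos (-(x 1)),
        x 7 + pos (x 1),
        x 6 - pos (-(x 1)),
        x 9 + pos (x 3),
        x 8 - pos (-(x 3)),
        x 11 + pos (x 3),
        x 10 - pos (-(x 3))] := by
  intro x
  funext i
  rw [DQuad, hm1]
  fin_cases i <;>
    · simp (config := { decide := true }) only [xMut, M1, m1Ones, m1Halves, epsQuad,
        quadOnes, quadHalves, sigmaQuad, Matrix.of_apply, pos_zero, pos_one, pos_neg_one,
        neg_neg, neg_zero, Matrix.cons_val_zero, Matrix.cons_val_one, Matrix.head_cons]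
      norm_num [pos_zero, pos_one, pos_neg_one, neg_neg]
      try ring

/-- (a) relabelling `μ₄(μ₂(ε))` by `σ` recovers `ε`; (b) the explicit formula for
`D(x)_i = ((μ^T_{4,μ₂(ε)} ∘ μ^T_{2,ε})(x))_{σ(i)}`; (c) `D` is an involution. -/

theorem quadrilateral_Dynkin_involution :
    (∀ i j : Fin 12,
      mutate (mutate epsQuad 1) 3 (sigmaQuad i) (sigmaQuad j) = epsQuad i j) ∧
    (∀ x : Fin 12 → ℚ, DQuad x =
      ![x 2 + pos (x 3) - pos (-(x 1)),
        -x 1,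
        x 0 + pos (x 1) - pos (-(x 3)),
        -x 3,
        x 5 + pos (x 1),
        x 4 - pos (-(x 1)),
        x 7 + pos (x 1),
        x 6 - pos (-(x 1)),
        x 9 + pos (x 3),
        x 8 - pos (-(x 3)),
        x 11 + pos (x 3),
        x 10 - pos (-(x 3))]) ∧
    DQuad ∘ DQuad = id := by
  constructor
  · intro i j
    rw [hm1, hm2]
    fin_cases i <;> fin_cases j <;> rfl
  constructor
  · exact partB
  · funext x i
    rw [Function.comp_apply, id_eq, partB, partB]
    fin_cases i <;>
      · try norm_num [v0, v1, v2, v3, v4, v5, v6, v7, v8, v9, v10, v11, neg_neg]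
        try ring
        try rfl

end SL3
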